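/- arXiv:0705.4442 — 5 statements merged into one kernel-verified Lean document; each statement's English description precedes it below -/
import Mathlib

section
/- Every finite nonempty relation admits a prime factorization: there exist prime factors C_1, ..., C_m (relations over pairwise disjoint nonempty attribute sets partitioning the schema) such that R = C_1 × ... × C_m. -/
open Classical

noncomputable def restrictT {α D : Type*} (V : Set α) (t : α → Option D) : α → Option D :=
  fun a => if a ∈ V then t a else none

def combineT {α D : Type*} (q r : α → Option D) : α → Option D :=
  fun a => (q a).orElse (fun _ => r a)

def prodRel {α D : Type*} (Q R : Set (α → Option D)) : Set (α → Option D) :=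
  Set.image2 combineT Q R

def IsOver {α D : Type*} (U : Set α) (t : α → Option D) : Prop :=
  ∀ a, (t a).isSome ↔ a ∈ U

def IsRelOver {α D : Type*} (U : Set α) (R : Set (α → Option D)) : Prop :=
  R.Finite ∧ ∀ t ∈ R, IsOver U t

noncomputable def projRel {α D : Type*} (V : Set α) (R : Set (α → Option D)) :
    Set (α → Option D) :=
  (restrictT V) '' R

def IsFactor {α D : Type*} (U : Set α) (R : Set (α → Option D))
    (V : Set α) (Q : Set (α → Option D)) : Prop :=
  V.Nonempty ∧ V ⊆ U ∧ IsRelOver V Q ∧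
    ∃ R', IsRelOver (U \ V) R' ∧ R = prodRel Q R'

noncomputable def prodList {α D : Type*} (L : List (Set (α → Option D))) :
    Set (α → Option D) :=
  L.foldr prodRel {fun _ => none}

def IsPrimeRel {α D : Type*} (U : Set α) (Q : Set (α → Option D)) : Prop :=
  IsRelOver U Q ∧ ∀ V P, IsFactor U Q V P → P = Q

def selEq {α D : Type*} (A : α) (v : D) (S : Set (α → Option D)) : Set (α → Option D) :=
  {t ∈ S | t A = some v}

def selNe {α D : Type*} (A : α) (v : D) (S : Set (α → Option D)) : Set (α → Option D) :=
  {t ∈ S | t A ≠ some v}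

/-! A relation that is not prime splits as `P × R'` over a proper nonempty `V ⊂ U` and its
complement `U \ V`; both pieces live on strictly smaller schemas, so by strong induction on `|U|`
they have prime factorizations, and their concatenation is a prime factorization of the whole
relation, because factors of factors are factors. -/

section Tuples

variable {α D : Type*}

theorem combineT_assoc (q r s : α → Option D) :
    combineT (combineT q r) s = combineT q (combineT r s) := by
  funext a
  simp only [combineT]
  cases q a <;> cases r a <;> rfl

@[simp]
theorem combineT_none_right (q : α → Option D) : combineT q (fun _ => none) = q := by
  funext a
  simp only [combineT]
  cases q a <;> rfl

theorem IsOver.combineT_union {A B : Set α} {p r : α → Option D} (hp : IsOver A p)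
    (hr : IsOver B r) : IsOver (A ∪ B) (combineT p r) := by
  intro a
  simp only [combineT, Set.mem_union, ← hp a, ← hr a]
  cases p a <;> cases r a <;> simp [Option.orElse]

theorem IsOver.combineT_comm {A B : Set α} {p r : α → Option D} (hp : IsOver A p)
    (hr : IsOver B r) (hAB : Disjoint A B) : combineT p r = combineT r p := by
  funext a
  have h_not_both : ¬ ((p a).isSome ∧ (r a).isSome) := fun ⟨hpa, hra⟩ =>
    hAB.ne_of_mem ((hp a).1 hpa) ((hr a).1 hra) rfl
  simp only [combineT]
  cases hpa : p a <;> cases hra : r a <;> simp_all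

theorem IsOver.eq_none_of_empty {t : α → Option D} (h : IsOver ∅ t) : t = fun _ => none := by
  funext a
  simpa using h a

end Tuples

section Relations

variable {α D : Type*} {P R : Set (α → Option D)}

theorem prodRel_assoc (Q R S : Set (α → Option D)) :
    prodRel (prodRel Q R) S = prodRel Q (prodRel R S) :=
  Set.image2_assoc combineT_assoc

@[simp]
theorem prodRel_singleton_none (Q : Set (α → Option D)) : prodRel Q {fun _ => none} = Q := by
  simp [prodRel, Set.image2_singleton_right]

@[simp]
theorem singleton_none_prodRel (Q : Set (α → Option D)) : prodRel {fun _ => none} Q = Q := by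
  rw [prodRel, Set.image2_singleton_left]
  exact Set.image_id' Q

theorem IsRelOver.prodRel_union {A B : Set α} (hP : IsRelOver A P) (hR : IsRelOver B R) :
    IsRelOver (A ∪ B) (prodRel P R) := by
  refine ⟨hP.1.image2 _ hR.1, ?_⟩
  rintro t ⟨p, hp, r, hr, rfl⟩
  exact (hP.2 p hp).combineT_union (hR.2 r hr)

theorem IsRelOver.prodRel_comm {A B : Set α} (hP : IsRelOver A P) (hR : IsRelOver B R)
    (hAB : Disjoint A B) : prodRel P R = prodRel R P := by
  unfold prodRel
  rw [Set.image2_swap]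
  refine Set.image2_congr fun r hr p hp => ?_
  exact (hP.2 p hp).combineT_comm (hR.2 r hr) hAB

theorem IsRelOver.eq_singleton_none_of_empty (h : IsRelOver ∅ R) (hne : R.Nonempty) :
    R = {fun _ => none} :=
  (hne.subset_singleton_iff).1 fun t ht => (h.2 t ht).eq_none_of_empty

theorem isRelOver_singleton_none : IsRelOver (∅ : Set α) {(fun _ => none : α → Option D)} :=
  ⟨Set.finite_singleton _, by rintro t rfl a; simp⟩

theorem prodList_append (L₁ L₂ : List (Set (α → Option D))) :
    prodList (L₁ ++ L₂) = prodRel (prodList L₁) (prodList L₂) := by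
  induction L₁ with
  | nil => simp [prodList]
  | cons Q L ih =>
    change prodRel Q (prodList (L ++ L₂)) = prodRel (prodRel Q (prodList L)) _
    rw [ih, prodRel_assoc]

end Relations

section Factors

variable {α D : Type*} {U V W : Set α} {P Q R R' : Set (α → Option D)}

theorem isFactor_self (hU : U.Nonempty) (hR : IsRelOver U R) : IsFactor U R U R :=
  ⟨hU, subset_rfl, hR, _, by simpa using isRelOver_singleton_none, by simp⟩

theorem isFactor_prodRel_left (hV : V.Nonempty) (hVU : V ⊆ U) (hP : IsRelOver V P)
    (hR' : IsRelOver (U \ V) R') : IsFactor U (prodRel P R') V P :=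
  ⟨hV, hVU, hP, R', hR', rfl⟩

theorem isFactor_prodRel_right (hUV : (U \ V).Nonempty) (hVU : V ⊆ U) (hP : IsRelOver V P)
    (hR' : IsRelOver (U \ V) R') : IsFactor U (prodRel P R') (U \ V) R' := by
  refine ⟨hUV, Set.sdiff_subset, hR', P, ?_, hP.prodRel_comm hR' Set.disjoint_sdiff_right⟩
  rwa [Set.sdiff_sdiff_cancel_left hVU]

theorem IsFactor.trans (hP : IsFactor U R V P) (hQ : IsFactor V P W Q) : IsFactor U R W Q := by
  obtain ⟨-, hVU, -, R', hR', rfl⟩ := hP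
  obtain ⟨hW, hWV, hQrel, P', hP', rfl⟩ := hQ
  refine ⟨hW, hWV.trans hVU, hQrel, prodRel P' R', ?_, prodRel_assoc _ _ _⟩
  have hR'' := hP'.prodRel_union hR'
  rwa [Set.union_comm, Set.sdiff_union_sdiff_cancel hVU hWV] at hR''

theorem sdiff_nonempty_of_ne_prodRel (hR' : IsRelOver (U \ V) R')
    (hne : (prodRel P R').Nonempty) (hPR : P ≠ prodRel P R') : (U \ V).Nonempty := by
  rw [Set.nonempty_iff_ne_empty]
  intro hUV
  rw [hUV] at hR'
  have hR'_eq := hR'.eq_singleton_none_of_empty (Set.image2_nonempty_iff.1 hne).2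
  simp [hR'_eq] at hPR

end Factors

section PrimeFactorization

variable {α D : Type*} {U V : Set α} {P R R' : Set (α → Option D)}
  {L L₁ L₂ : List (Set α × Set (α → Option D))}

structure IsPrimeFactorization (U : Set α) (R : Set (α → Option D))
    (L : List (Set α × Set (α → Option D))) : Prop where
  ne_nil : L ≠ []
  isFactor_isPrimeRel : ∀ p ∈ L, IsFactor U R p.1 p.2 ∧ IsPrimeRel p.1 p.2
  pairwise_disjoint : L.Pairwise fun p q => Disjoint p.1 q.1
  mem_iff : ∀ a, a ∈ U ↔ ∃ p ∈ L, a ∈ p.1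
  prodList_eq : prodList (L.map Prod.snd) = R

theorem IsPrimeFactorization.mem_subset (h : IsPrimeFactorization U R L) {p} (hp : p ∈ L) :
    p.1 ⊆ U :=
  (h.isFactor_isPrimeRel p hp).1.2.1

theorem isPrimeFactorization_singleton (hU : U.Nonempty) (hR : IsPrimeRel U R) :
    IsPrimeFactorization U R [(U, R)] where
  ne_nil := List.cons_ne_nil _ _
  isFactor_isPrimeRel p hp := by
    rw [List.mem_singleton.1 hp]
    exact ⟨isFactor_self hU hR.1, hR⟩
  pairwise_disjoint := List.pairwise_singleton _ _
  mem_iff a := by simp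
  prodList_eq := by simp [prodList]

theorem IsPrimeFactorization.append (hV : V.Nonempty) (hUV : (U \ V).Nonempty) (hVU : V ⊆ U)
    (hP : IsRelOver V P) (hR' : IsRelOver (U \ V) R') (h₁ : IsPrimeFactorization V P L₁)
    (h₂ : IsPrimeFactorization (U \ V) R' L₂) :
    IsPrimeFactorization U (prodRel P R') (L₁ ++ L₂) where
  ne_nil := by simp [h₁.ne_nil]
  isFactor_isPrimeRel p hp := by
    rcases List.mem_append.1 hp with hp | hp
    · exact ⟨(isFactor_prodRel_left hV hVU hP hR').trans (h₁.isFactor_isPrimeRel p hp).1,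
        (h₁.isFactor_isPrimeRel p hp).2⟩
    · exact ⟨(isFactor_prodRel_right hUV hVU hP hR').trans (h₂.isFactor_isPrimeRel p hp).1,
        (h₂.isFactor_isPrimeRel p hp).2⟩
  pairwise_disjoint := List.pairwise_append.2 ⟨h₁.pairwise_disjoint, h₂.pairwise_disjoint,
    fun p hp q hq => Set.disjoint_sdiff_right.mono (h₁.mem_subset hp) (h₂.mem_subset hq)⟩
  mem_iff a := by
    by_cases haV : a ∈ V
    · obtain ⟨p, hp, hap⟩ := (h₁.mem_iff a).1 haV
      exact ⟨fun _ => ⟨p, List.mem_append_left _ hp, hap⟩, fun _ => hVU haV⟩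
    · have haL₁ : ¬∃ p ∈ L₁, a ∈ p.1 := (h₁.mem_iff a).not.1 haV
      simpa [haV, haL₁, List.mem_append, or_and_right, exists_or] using h₂.mem_iff a
  prodList_eq := by
    rw [List.map_append, prodList_append, h₁.prodList_eq, h₂.prodList_eq]

theorem exists_isPrimeFactorization (hU : U.Finite) (hUne : U.Nonempty) (hR : IsRelOver U R)
    (hRne : R.Nonempty) : ∃ L, IsPrimeFactorization U R L := by
  obtain ⟨n, hn⟩ : ∃ n, U.ncard = n := ⟨_, rfl⟩
  induction n using Nat.strong_induction_on generalizing U R with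
  | _ n ih =>
  by_cases hprime : IsPrimeRel U R
  · exact ⟨_, isPrimeFactorization_singleton hUne hprime⟩
  obtain ⟨V, P, ⟨hV, hVU, hP, R', hR', rfl⟩, hPR⟩ : ∃ V P, IsFactor U R V P ∧ P ≠ R := by
    simpa [IsPrimeRel, hR] using hprime
  have hUV := sdiff_nonempty_of_ne_prodRel hR' hRne hPR
  obtain ⟨hPne, hR'ne⟩ := Set.image2_nonempty_iff.1 hRne
  obtain ⟨L₁, h₁⟩ := ih _ (hn ▸ Set.ncard_lt_ncard ⟨hVU, Set.sdiff_nonempty.1 hUV⟩ hU)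
    (hU.subset hVU) hV hP hPne rfl
  obtain ⟨L₂, h₂⟩ := ih _ (hn ▸ Set.ncard_lt_ncard (hVU.sdiff_ssubset_of_nonempty hV) hU)
    (hU.subset Set.sdiff_subset) hUV hR' hR'ne rfl
  exact ⟨_, h₁.append hV hUV hVU hP hR' h₂⟩

end PrimeFactorization

theorem stmt_0 {α D : Type*} (U : Set α) (hUfin : U.Finite) (hUne : U.Nonempty)
    (R : Set (α → Option D)) (hR : IsRelOver U R) (hRne : R.Nonempty) :
    ∃ L : List (Set α × Set (α → Option D)),
      L ≠ [] ∧
      (∀ p ∈ L, IsFactor U R p.1 p.2 ∧ IsPrimeRel p.1 p.2) ∧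
      L.Pairwise (fun p q => Disjoint p.1 q.1) ∧
      (∀ a, a ∈ U ↔ ∃ p ∈ L, a ∈ p.1) ∧
      prodList (L.map Prod.snd) = R := by
  obtain ⟨L, hL⟩ := exists_isPrimeFactorization hUfin hUne hR hRne
  exact ⟨L, hL.ne_nil, hL.isFactor_isPrimeRel, hL.pairwise_disjoint, hL.mem_iff, hL.prodList_eq⟩
end

section
/- The prime factorization of a finite nonempty relation is unique: if {π_{U_1}(R), ..., π_{U_m}(R)} and {π_{V_1}(R), ..., π_{V_n}(R)} are both prime factorizations of R, then the two partitions {U_1,...,U_m} and {V_1,...,V_n} of the schema coincide (and hence the factor sets are equal). -/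
/-! A subset `V` of the schema carries a factor of `R` exactly when `R` is closed under the
operation that takes the `V`-part of one tuple and the rest of another. If `V` and `W` are
factors, the closure of `R` under mixing on `W` makes `V ∩ W` a factor of `π_V R`; when `π_V R`
is prime this factor is all of `π_V R`, which forces `V ⊆ W` as soon as `R` is nonempty. So two
prime blocks that meet are equal, and every block of one prime factorization is a block of the
other. -/

open Classical

noncomputable def mixT {α D : Type*} (V : Set α) (s t : α → Option D) : α → Option D :=
  fun a => if a ∈ V then s a else t a

section Tuples

variable {α D : Type*}

theorem mixT_self (V : Set α) (t : α → Option D) : mixT V t t = t := by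
  funext a
  simp only [mixT, ite_self]

theorem mixT_mixT_mixT (V : Set α) (q r q' r' : α → Option D) :
    mixT V (mixT V q r) (mixT V q' r') = mixT V q r' := by
  funext a
  by_cases ha : a ∈ V <;> simp [mixT, ha]

theorem restrictT_mixT (V W : Set α) (s t : α → Option D) :
    restrictT V (mixT W s t) = mixT (V ∩ W) (restrictT V s) (restrictT V t) := by
  funext a
  by_cases hV : a ∈ V <;> by_cases hW : a ∈ W <;> simp [restrictT, mixT, hV, hW]

theorem IsOver.eq_none {U : Set α} {t : α → Option D} (ht : IsOver U t) {a : α}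
    (ha : a ∉ U) : t a = none :=
  Option.not_isSome_iff_eq_none.1 fun h => ha ((ht a).1 h)

theorem IsOver.unique {U V : Set α} {t : α → Option D} (hU : IsOver U t) (hV : IsOver V t) :
    U = V :=
  Set.ext fun a => (hU a).symm.trans (hV a)

theorem IsOver.restrict {U V : Set α} {t : α → Option D} (ht : IsOver U t) (hVU : V ⊆ U) :
    IsOver V (restrictT V t) := by
  intro a
  by_cases ha : a ∈ V
  · simp [restrictT, ha, (ht a).2 (hVU ha)]
  · simp [restrictT, ha]

theorem IsOver.combineT_eq_mixT {V : Set α} {q : α → Option D} (hq : IsOver V q)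
    (r : α → Option D) : combineT q r = mixT V q r := by
  funext a
  by_cases ha : a ∈ V
  · obtain ⟨x, hx⟩ := Option.isSome_iff_exists.1 ((hq a).2 ha)
    simp [combineT, mixT, hx, ha]
  · simp [combineT, mixT, hq.eq_none ha, ha]

theorem IsOver.mixT_restrictT_restrictT_diff {U : Set α} {t : α → Option D} (ht : IsOver U t)
    (V : Set α) (s : α → Option D) :
    mixT V (restrictT V s) (restrictT (U \ V) t) = mixT V s t := by
  funext a
  by_cases hV : a ∈ V
  · simp [mixT, restrictT, hV]
  · by_cases hU : a ∈ U
    · simp [mixT, restrictT, hV, hU]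
    · simp [mixT, restrictT, hV, hU, ht.eq_none hU]

end Tuples

section Factors

variable {α D : Type*} {U V W : Set α} {R Q : Set (α → Option D)}

theorem IsFactor.mixT_mem (h : IsFactor U R V Q) {s t : α → Option D} (hs : s ∈ R)
    (ht : t ∈ R) : mixT V s t ∈ R := by
  obtain ⟨-, -, ⟨-, hQ⟩, R', -, rfl⟩ := h
  obtain ⟨q, hq, r, -, rfl⟩ := hs
  obtain ⟨q', hq', r', hr', rfl⟩ := ht
  refine ⟨q, hq, r', hr', ?_⟩
  rw [(hQ q hq).combineT_eq_mixT, (hQ q hq).combineT_eq_mixT, (hQ q' hq').combineT_eq_mixT,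
    mixT_mixT_mixT]

theorem isFactor_projRel_of_mixT_mem (hR : IsRelOver U R) (hVne : V.Nonempty) (hVU : V ⊆ U)
    (hmix : ∀ s ∈ R, ∀ t ∈ R, mixT V s t ∈ R) : IsFactor U R V (projRel V R) := by
  obtain ⟨hRfin, hRover⟩ := hR
  have hcombine : ∀ s ∈ R, ∀ t ∈ R,
      combineT (restrictT V s) (restrictT (U \ V) t) = mixT V s t := fun s hs t ht => by
    rw [((hRover s hs).restrict hVU).combineT_eq_mixT,
      (hRover t ht).mixT_restrictT_restrictT_diff]
  refine ⟨hVne, hVU, ⟨hRfin.image _, ?_⟩, projRel (U \ V) R, ⟨hRfin.image _, ?_⟩, ?_⟩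
  · rintro _ ⟨s, hs, rfl⟩
    exact (hRover s hs).restrict hVU
  · rintro _ ⟨s, hs, rfl⟩
    exact (hRover s hs).restrict Set.sdiff_subset
  · ext t
    constructor
    · intro ht
      exact ⟨_, ⟨t, ht, rfl⟩, _, ⟨t, ht, rfl⟩, by rw [hcombine t ht t ht, mixT_self]⟩
    · rintro ⟨_, ⟨s, hs, rfl⟩, _, ⟨s', hs', rfl⟩, rfl⟩
      rw [hcombine s hs s' hs']
      exact hmix s hs s' hs'

theorem IsPrimeRel.subset_of_isFactor (hRne : R.Nonempty)
    (hV : IsPrimeRel V (projRel V R)) (hW : IsFactor U R W Q) (hVW : (V ∩ W).Nonempty) :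
    V ⊆ W := by
  have hmix : ∀ s ∈ projRel V R, ∀ t ∈ projRel V R, mixT (V ∩ W) s t ∈ projRel V R := by
    rintro _ ⟨s, hs, rfl⟩ _ ⟨t, ht, rfl⟩
    exact ⟨mixT W s t, hW.mixT_mem hs ht, restrictT_mixT V W s t⟩
  have hfac := isFactor_projRel_of_mixT_mem hV.1 hVW Set.inter_subset_left hmix
  obtain ⟨t, ht⟩ := hRne
  have htV : restrictT V t ∈ projRel V R := ⟨t, ht, rfl⟩
  have htVW : restrictT V t ∈ projRel (V ∩ W) (projRel V R) := by
    rwa [hV.2 _ _ hfac]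
  have hVW_eq : V ∩ W = V := (hfac.2.2.1.2 _ htVW).unique (hV.1.2 _ htV)
  exact Set.inter_eq_left.1 hVW_eq

theorem mem_of_isPrimeRel_of_covers (hRne : R.Nonempty) {L : List (Set α)}
    (hcov : ∀ a, a ∈ U → ∃ W ∈ L, a ∈ W) (hfac : ∀ W ∈ L, IsFactor U R W (projRel W R))
    (hprime : ∀ W ∈ L, IsPrimeRel W (projRel W R))
    (hfV : IsFactor U R V (projRel V R)) (hpV : IsPrimeRel V (projRel V R)) : V ∈ L := by
  obtain ⟨a, ha⟩ := hfV.1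
  obtain ⟨W, hWL, haW⟩ := hcov a (hfV.2.1 ha)
  have hVW : V ⊆ W := hpV.subset_of_isFactor hRne (hfac W hWL) ⟨a, ha, haW⟩
  have hWV : W ⊆ V := (hprime W hWL).subset_of_isFactor hRne hfV ⟨a, haW, ha⟩
  rwa [hVW.antisymm hWV]

end Factors

theorem stmt_1_general {α D : Type*} (U : Set α)
    (R : Set (α → Option D)) (hRne : R.Nonempty)
    (L1 L2 : List (Set α))
    (hcov1 : ∀ a, a ∈ U ↔ ∃ V ∈ L1, a ∈ V)
    (hfac1 : ∀ V ∈ L1, IsFactor U R V (projRel V R))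
    (hprime1 : ∀ V ∈ L1, IsPrimeRel V (projRel V R))
    (hcov2 : ∀ a, a ∈ U ↔ ∃ V ∈ L2, a ∈ V)
    (hfac2 : ∀ V ∈ L2, IsFactor U R V (projRel V R))
    (hprime2 : ∀ V ∈ L2, IsPrimeRel V (projRel V R)) :
    ∀ V : Set α, V ∈ L1 ↔ V ∈ L2 := fun V =>
  ⟨fun hV => mem_of_isPrimeRel_of_covers hRne (fun a => (hcov2 a).1) hfac2 hprime2
      (hfac1 V hV) (hprime1 V hV),
    fun hV => mem_of_isPrimeRel_of_covers hRne (fun a => (hcov1 a).1) hfac1 hprime1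
      (hfac2 V hV) (hprime2 V hV)⟩

theorem stmt_1 {α D : Type*} (U : Set α) (hUfin : U.Finite)
    (R : Set (α → Option D)) (hR : IsRelOver U R) (hRne : R.Nonempty)
    (L1 L2 : List (Set α))
    (hne1 : ∀ V ∈ L1, V.Nonempty) (hd1 : L1.Pairwise Disjoint)
    (hcov1 : ∀ a, a ∈ U ↔ ∃ V ∈ L1, a ∈ V)
    (hfac1 : ∀ V ∈ L1, IsFactor U R V (projRel V R))
    (hprime1 : ∀ V ∈ L1, IsPrimeRel V (projRel V R))
    (hprod1 : prodList (L1.map (fun V => projRel V R)) = R)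
    (hne2 : ∀ V ∈ L2, V.Nonempty) (hd2 : L2.Pairwise Disjoint)
    (hcov2 : ∀ a, a ∈ U ↔ ∃ V ∈ L2, a ∈ V)
    (hfac2 : ∀ V ∈ L2, IsFactor U R V (projRel V R))
    (hprime2 : ∀ V ∈ L2, IsPrimeRel V (projRel V R))
    (hprod2 : prodList (L2.map (fun V => projRel V R)) = R) :
    ∀ V : Set α, V ∈ L1 ↔ V ∈ L2 :=
  stmt_1_general U R hRne L1 L2 hcov1 hfac1 hprime1 hcov2 hfac2 hprime2
end

section
/- Factor propagation: Let S be a finite nonempty relation over schema U, F a relation over schema U_F ⊆ U, A an attribute of U not in U_F, and v a value appearing in π_A(S) such that both σ_{A=v}(S) and σ_{A≠v}(S) are nonempty. Then F is a factor of S (i.e., S = F × π_{U\U_F}(S)) if and only if F is a factor of both σ_{A=v}(S) and σ_{A≠v}(S). -/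
open Classical

theorem stmt_4 {α D : Type*} (U UF : Set α) (hUfin : U.Finite) (hUF : UF ⊆ U)
    (A : α) (hAU : A ∈ U) (hAF : A ∉ UF)
    (S : Set (α → Option D)) (hS : IsRelOver U S) (hSne : S.Nonempty)
    (F : Set (α → Option D)) (hF : IsRelOver UF F)
    (v : D) (hv : (selEq A v S).Nonempty) (hv' : (selNe A v S).Nonempty) :
    IsFactor U S UF F ↔
      (IsFactor U (selEq A v S) UF F ∧ IsFactor U (selNe A v S) UF F) := by
  have hqA : ∀ q ∈ F, q A = none := fun q hq =>
    Option.not_isSome_iff_eq_none.mp (fun h => hAF ((hF.2 q hq A).mp h))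
  have hcomb : ∀ q ∈ F, ∀ r : α → Option D, combineT q r A = r A := by
    intro q hq r
    simp [combineT, hqA q hq]
  constructor
  · rintro ⟨hne, hsub, hFov, R', hR', hSeq⟩
    constructor
    · refine ⟨hne, hsub, hFov, selEq A v R',
        ⟨hR'.1.subset (fun t ht => ht.1), fun t ht => hR'.2 t ht.1⟩, ?_⟩
      subst hSeq
      ext t
      constructor
      · rintro ⟨⟨q, hq, r, hr, rfl⟩, htA⟩
        exact ⟨q, hq, r, ⟨hr, by rwa [hcomb q hq r] at htA⟩, rfl⟩
      · rintro ⟨q, hq, r, ⟨hr, hrA⟩, rfl⟩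
        exact ⟨⟨q, hq, r, hr, rfl⟩, by rw [hcomb q hq r]; exact hrA⟩
    · refine ⟨hne, hsub, hFov, selNe A v R',
        ⟨hR'.1.subset (fun t ht => ht.1), fun t ht => hR'.2 t ht.1⟩, ?_⟩
      subst hSeq
      ext t
      constructor
      · rintro ⟨⟨q, hq, r, hr, rfl⟩, htA⟩
        exact ⟨q, hq, r, ⟨hr, by rwa [hcomb q hq r] at htA⟩, rfl⟩
      · rintro ⟨q, hq, r, ⟨hr, hrA⟩, rfl⟩
        exact ⟨⟨q, hq, r, hr, rfl⟩, by rw [hcomb q hq r]; exact hrA⟩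
  · rintro ⟨⟨hne, hsub, hFov, R1, hR1, hS1⟩, ⟨-, -, -, R2, hR2, hS2⟩⟩
    refine ⟨hne, hsub, hFov, R1 ∪ R2,
      ⟨hR1.1.union hR2.1, fun t ht => ht.elim (hR1.2 t) (hR2.2 t)⟩, ?_⟩
    have hunion : S = selEq A v S ∪ selNe A v S := by
      ext t
      constructor
      · intro ht
        by_cases h : t A = some v
        · exact Or.inl ⟨ht, h⟩
        · exact Or.inr ⟨ht, h⟩
      · rintro (⟨ht, -⟩ | ⟨ht, -⟩) <;> exact ht
    rw [hunion, hS1, hS2]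
    unfold prodRel
    rw [← Set.image2_union_right]
end

section
/- Reduction correctness for 3CNF satisfiability via set cover of clauses: let c_1,...,c_n be 3-clauses over variables x_1,...,x_m, where each clause c_i = c_{i,1} ∨ c_{i,2} ∨ c_{i,3}. For each variable x_j define two sets: P_j = {i : some literal of c_i equals x_j} and N_j = {i : some literal of c_i equals ¬x_j}. Then ⋀_i c_i is satisfiable if and only if there is a choice function picking for each j either P_j or N_j such that the union of chosen sets equals {1,...,n}. -/
/-! A clause is satisfied by `ν` exactly when it contains the literal `(j, ν j)` for some variable
`j`, i.e. when its index lies in `P_j` or `N_j` according as `ν j` is true or false. So the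
assignment `ν` and the choice function `σ` are the same object. -/

section ClauseCover

variable {ι κ V : Type*} (c : ι → κ → V × Bool)

theorem exists_literal_satisfied_iff (ν : V → Bool) (i : ι) :
    (∃ k, ν (c i k).1 = (c i k).2) ↔ ∃ j k, c i k = (j, ν j) := by
  constructor
  · rintro ⟨k, hk⟩
    exact ⟨(c i k).1, k, Prod.ext rfl hk.symm⟩
  · rintro ⟨j, k, hk⟩
    exact ⟨k, by simp [hk]⟩

theorem mem_ite_setOf_literal_iff (b : Bool) (j : V) (i : ι) :
    i ∈ (if b then {i' | ∃ k, c i' k = (j, true)} else {i' | ∃ k, c i' k = (j, false)}) ↔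
      ∃ k, c i k = (j, b) := by
  cases b <;> simp

end ClauseCover

theorem stmt_12 (n m : ℕ) (c : Fin n → Fin 3 → Fin m × Bool) :
    (∃ ν : Fin m → Bool, ∀ i, ∃ k, ν (c i k).1 = (c i k).2) ↔
      (∃ σ : Fin m → Bool, ∀ i : Fin n, ∃ j : Fin m,
        i ∈ (if σ j then {i' : Fin n | ∃ k, c i' k = (j, true)}
             else {i' : Fin n | ∃ k, c i' k = (j, false)})) := by
  simp only [exists_literal_satisfied_iff, mem_ite_setOf_literal_iff]
end

section
/- Tuple certainty characterization for tuple-level WSDs without variables: let W = {C_1,...,C_m} be a set of nonempty component relations whose product encodes the worlds (each component tuple defines a set of database tuples, possibly including the padding tuple t_⊥ which contributes nothing). A database tuple t is present in every world represented by W if and only if there exists a component C_i such that every component tuple of C_i contains t among the tuples it defines. -/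
/-- If no `C i` lies in `S i`, choosing `w i ∈ C i \ S i` in every coordinate gives a point of the
product outside the union. -/
theorem Set.univ_pi_subset_iUnion_preimage_eval_iff {ι : Type*} {α : ι → Type*}
    (C S : ∀ i, Set (α i)) :
    Set.pi Set.univ C ⊆ ⋃ i, Function.eval i ⁻¹' S i ↔ ∃ i, C i ⊆ S i := by
  constructor
  · contrapose!
    intro hC
    obtain ⟨w, hw⟩ := Set.univ_pi_nonempty_iff.2 fun i => Set.not_subset.1 (hC i)
    exact Set.not_subset.2
      ⟨w, fun i _ => (hw i trivial).1, by simpa using fun i => (hw i trivial).2⟩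
  · rintro ⟨i, hi⟩ w hw
    exact Set.mem_iUnion.2 ⟨i, hi (hw i trivial)⟩

theorem stmt_14_general {W T : Type*} (m : ℕ) (C : Fin m → Set W)
    (decode : W → Set T) (t : T) :
    (∀ w : Fin m → W, (∀ i, w i ∈ C i) → t ∈ ⋃ i, decode (w i)) ↔
      ∃ i, ∀ u ∈ C i, t ∈ decode u := by
  simpa [Set.subset_def] using
    Set.univ_pi_subset_iUnion_preimage_eval_iff C fun _ => {u | t ∈ decode u}

theorem stmt_14 {W T : Type*} (m : ℕ) (C : Fin m → Set W)
    (hCne : ∀ i, (C i).Nonempty) (hCfin : ∀ i, (C i).Finite)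
    (decode : W → Set T) (hdec : ∀ u, (decode u).Finite) (t : T) :
    (∀ w : Fin m → W, (∀ i, w i ∈ C i) → t ∈ ⋃ i, decode (w i)) ↔
      ∃ i, ∀ u ∈ C i, t ∈ decode u :=
  stmt_14_general m C decode t
end
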